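/- arXiv:0905.4953 — 6 statements merged into one kernel-verified Lean document; each statement's English description precedes it below -/
import Mathlib

section
/- If rank(A) > 1 for an effect A, then the Lüders operation Λ_A(ρ) = √A ρ √A is not a conditional state preparator: there is no density matrix ξ with Λ_A(ρ) = tr[ρA] ξ for all ρ. -/
/-!
Feeding the matrix units `Eᵢⱼ` into `√A ρ √A = tr[ρA] ξ` gives `(√A)ₖᵢ (√A)ⱼₗ = Aⱼᵢ ξₖₗ`.
Fixing `j, l` with `(√A)ⱼₗ ≠ 0`, every column of `√A` is a multiple of the `l`-th column of `ξ`,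
so `√A` has rank at most one, and hence so does `A = √A √A`.
-/

open Matrix Kronecker
open scoped ComplexOrder

/-- A density matrix (quantum state). -/
def IsDensity {n : Type*} [Fintype n] (ρ : Matrix n n ℂ) : Prop :=
  ρ.PosSemidef ∧ ρ.trace = 1

/-- An effect: `0 ≤ A ≤ I`. -/
def IsEffect {n : Type*} [Fintype n] [DecidableEq n] (A : Matrix n n ℂ) : Prop :=
  A.PosSemidef ∧ (1 - A).PosSemidef

/-- Complete positivity, via the existence of a finite Kraus decomposition
(equivalent to complete positivity in finite dimension). -/
def IsCP {n : Type*} [Fintype n] (Φ : Matrix n n ℂ → Matrix n n ℂ) : Prop :=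
  ∃ (m : ℕ) (X : Fin m → Matrix n n ℂ), ∀ ρ, Φ ρ = ∑ k, X k * ρ * (X k)ᴴ

/-- A quantum operation: completely positive and `0 ≤ tr[Φ(ρ)] ≤ 1` on states. -/
def IsOperation {n : Type*} [Fintype n] (Φ : Matrix n n ℂ → Matrix n n ℂ) : Prop :=
  IsCP Φ ∧ ∀ ρ, IsDensity ρ → ∃ t : ℝ, (Φ ρ).trace = (t : ℂ) ∧ 0 ≤ t ∧ t ≤ 1

/-- The Choi–Jamiolkowski operator `(Φ ⊗ I)(|ψ₊⟩⟨ψ₊|)` of a map on `d × d` matrices. -/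
noncomputable def Choi {d : ℕ} (Φ : Matrix (Fin d) (Fin d) ℂ → Matrix (Fin d) (Fin d) ℂ) :
    Matrix (Fin d × Fin d) (Fin d × Fin d) ℂ :=
  ((d : ℂ))⁻¹ • ∑ j : Fin d, ∑ k : Fin d,
    (Φ (Matrix.single j k 1)) ⊗ₖ (Matrix.single j k 1)

/-- Partial trace over the first tensor factor. -/
noncomputable def ptr1 {d : ℕ} (M : Matrix (Fin d × Fin d) (Fin d × Fin d) ℂ) :
    Matrix (Fin d) (Fin d) ℂ :=
  Matrix.of fun i j => ∑ k : Fin d, M (k, i) (k, j)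

/-- Partial trace over the second tensor factor. -/
noncomputable def ptr2 {d : ℕ} (M : Matrix (Fin d × Fin d) (Fin d × Fin d) ℂ) :
    Matrix (Fin d) (Fin d) ℂ :=
  Matrix.of fun i j => ∑ k : Fin d, M (i, k) (j, k)

/-- Coexistence via a four-outcome instrument: four CP maps with trace-preserving sum,
`Φ = J₁ + J₂` and `Ψ = J₁ + J₃`. -/
def Coexistent4 {n : Type*} [Fintype n] (Φ Ψ : Matrix n n ℂ → Matrix n n ℂ) : Prop :=
  ∃ J₁ J₂ J₃ J₄ : Matrix n n ℂ → Matrix n n ℂ,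
    IsCP J₁ ∧ IsCP J₂ ∧ IsCP J₃ ∧ IsCP J₄ ∧
    (∀ ρ, IsDensity ρ → (J₁ ρ + J₂ ρ + J₃ ρ + J₄ ρ).trace = 1) ∧
    (∀ ρ, Φ ρ = J₁ ρ + J₂ ρ) ∧ (∀ ρ, Ψ ρ = J₁ ρ + J₃ ρ)

/-- Coexistence in Kraus form: a common family of Kraus operators `{X_j}` with
`∑ⱼ Xⱼ* Xⱼ ≤ I`, and index subsets realizing `Φ` and `Ψ`. -/
def KrausCoexistent {n : Type*} [Fintype n] [DecidableEq n]
    (Φ Ψ : Matrix n n ℂ → Matrix n n ℂ) : Prop :=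
  ∃ (m : ℕ) (X : Fin m → Matrix n n ℂ) (J₁ J₂ : Finset (Fin m)),
    (∀ ρ, Φ ρ = ∑ j ∈ J₁, X j * ρ * (X j)ᴴ) ∧
    (∀ ρ, Ψ ρ = ∑ j ∈ J₂, X j * ρ * (X j)ᴴ) ∧
    ((1 : Matrix n n ℂ) - ∑ j, (X j)ᴴ * X j).PosSemidef

/-- The positive square root of a positive semidefinite matrix (as in the older Mathlib). -/
noncomputable def Matrix.PosSemidef.sqrt {n : Type*} [Fintype n] [DecidableEq n]
    {A : Matrix n n ℂ} (hA : A.PosSemidef) : Matrix n n ℂ :=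
  hA.1.eigenvectorUnitary.1 * diagonal ((↑) ∘ Real.sqrt ∘ hA.1.eigenvalues) *
    (star hA.1.eigenvectorUnitary : Matrix n n ℂ)

theorem Matrix.PosSemidef.sqrt_mul_self {n : Type*} [Fintype n] [DecidableEq n]
    {A : Matrix n n ℂ} (hA : A.PosSemidef) : hA.sqrt * hA.sqrt = A := by
  set U : Matrix n n ℂ := hA.1.eigenvectorUnitary.1
  set D : Matrix n n ℂ := diagonal ((↑) ∘ Real.sqrt ∘ hA.1.eigenvalues)
  have hUU : star U * U = 1 := Unitary.coe_star_mul_self _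
  have hDD : D * D = diagonal (RCLike.ofReal ∘ hA.1.eigenvalues) := by
    simp only [D, diagonal_mul_diagonal, Function.comp_apply, ← Complex.ofReal_mul,
      Real.mul_self_sqrt (hA.eigenvalues_nonneg _)]
    rfl
  have hspec := hA.1.spectral_theorem
  rw [Unitary.conjStarAlgAut_apply] at hspec
  calc hA.sqrt * hA.sqrt = U * D * star U * (U * D * star U) := rfl
    _ = U * (D * D) * star U := by
        simp only [Matrix.mul_assoc]
        rw [← Matrix.mul_assoc (star U) U, hUU, Matrix.one_mul]
    _ = A := by rw [hDD]; exact hspec.symm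

theorem Matrix.mul_single_one_mul_apply {K l m n o : Type*} [CommSemiring K] [Fintype m]
    [Fintype n] [DecidableEq m] [DecidableEq n]
    (B : Matrix l m K) (C : Matrix n o K) (i : m) (j : n) (k : l) (p : o) :
    (B * single i j (1 : K) * C) k p = B k i * C j p := by
  simp [mul_apply, single, ite_and]

theorem Matrix.rank_le_one_of_forall_mul_mul_eq_smul {K l m n o : Type*} [Field K] [Fintype l]
    [Fintype m] [Fintype n] [DecidableEq m] [DecidableEq n]
    {B : Matrix l m K} {C : Matrix n o K} (hC : C ≠ 0) (ξ : Matrix l o K)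
    (h : ∀ ρ : Matrix m n K, ∃ c : K, B * ρ * C = c • ξ) : B.rank ≤ 1 := by
  obtain ⟨j, p, hjp⟩ : ∃ j p, C j p ≠ 0 := by
    by_contra! h0
    exact hC (Matrix.ext h0)
  choose c hc using fun i => h (single i j (1 : K))
  suffices B = vecMulVec (fun k => ξ k p) (fun i => c i / C j p) from
    this ▸ rank_vecMulVec_le _ _
  ext k i
  have hki := congrFun (congrFun (hc i) k) p
  rw [mul_single_one_mul_apply, smul_apply, smul_eq_mul] at hki
  rw [vecMulVec_apply]
  field_simp
  linear_combination hki

theorem stmt5_general (d : ℕ) (A : Matrix (Fin d) (Fin d) ℂ)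
    (hA : A.PosSemidef)
    (hrank : 2 ≤ A.rank) :
    ¬ ∃ ξ : Matrix (Fin d) (Fin d) ℂ, IsDensity ξ ∧
        ∀ ρ : Matrix (Fin d) (Fin d) ℂ,
          hA.sqrt * ρ * hA.sqrt = (ρ * A).trace • ξ := by
  rintro ⟨ξ, -, hξ⟩
  have hA_eq : hA.sqrt * hA.sqrt = A := hA.sqrt_mul_self
  have hsqrt_ne : hA.sqrt ≠ 0 := by
    rintro h0
    rw [h0, zero_mul] at hA_eq
    simp [← hA_eq] at hrank
  have hrank_sqrt : hA.sqrt.rank ≤ 1 :=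
    rank_le_one_of_forall_mul_mul_eq_smul hsqrt_ne ξ fun ρ => ⟨_, hξ ρ⟩
  have hrank_A : A.rank ≤ 1 := hA_eq ▸ (rank_mul_le_left _ _).trans hrank_sqrt
  omega

/-- if an effect `A` has rank at least 2, then the Lüders operation `Λ_A`
is not a conditional state preparator. -/
theorem stmt5 (d : ℕ) (A : Matrix (Fin d) (Fin d) ℂ)
    (hA : A.PosSemidef) (hA' : ((1 : Matrix (Fin d) (Fin d) ℂ) - A).PosSemidef)
    (hrank : 2 ≤ A.rank) :
    ¬ ∃ ξ : Matrix (Fin d) (Fin d) ℂ, IsDensity ξ ∧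
        ∀ ρ : Matrix (Fin d) (Fin d) ℂ,
          hA.sqrt * ρ * hA.sqrt = (ρ * A).trace • ξ :=
  stmt5_general d A hA hrank
end

section
/- Two operations Φ and Ψ on ℂ^d are coexistent if and only if there exists a finite family of operators {X_j}_{j∈J} and subsets J₁, J₂ ⊆ J such that Φ(ρ) = Σ_{j∈J₁} X_j ρ X_j*, Ψ(ρ) = Σ_{j∈J₂} X_j ρ X_j*, and Σ_{j∈J} X_j* X_j = I; moreover J can be chosen with at most 3d² + 1 elements. -/
open Matrix Kronecker
open scoped ComplexOrder

/-!
A Kraus family `(Xₖ)` enters the map `ρ ↦ ∑ₖ Xₖ ρ Xₖ*` only through its Choi matrix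
`∑ₖ vec(Xₖ) vec(Xₖ)*`, a positive matrix of size `d² × d²`; writing it as `BᴴB` with `B` square
turns the rows of `B` into `d²` Kraus operators for the same map. Given an instrument
`(J₁, J₂, J₃, J₄)`, concatenate such families for `J₁, J₂, J₃` and replace `J₄`, which does not
occur in `Φ` or `Ψ`, by a single operator `B` with `BᴴB = ∑ₖ Zₖ*Zₖ` for its Kraus operators `Zₖ`.
The trace condition on states says that the quadratic form of `∑ⱼ Xⱼ*Xⱼ` is that of `1`, so this
sum is `1`. Conversely, the index sets `J₁ ∩ J₂`, `J₁ \ J₂`, `J₂ \ J₁`, `(J₁ ∪ J₂)ᶜ` of a common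
family define an instrument.
-/

open scoped MatrixOrder in
lemma Matrix.PosSemidef.exists_eq_conjTranspose_mul_self {m : Type*} [Fintype m] [DecidableEq m]
    {A : Matrix m m ℂ} (hA : A.PosSemidef) : ∃ B : Matrix m m ℂ, A = Bᴴ * B :=
  CStarAlgebra.nonneg_iff_eq_star_mul_self.mp hA.nonneg

section Kraus

variable {n ι : Type*} [Fintype n]

lemma isCP_sum_kraus (X : ι → Matrix n n ℂ) (s : Finset ι) :
    IsCP fun ρ => ∑ j ∈ s, X j * ρ * (X j)ᴴ :=
  ⟨s.card, fun k => X (s.equivFin.symm k), fun ρ =>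
    (Finset.sum_coe_sort s _).symm.trans <| Fintype.sum_equiv s.equivFin _ _ fun j => by simp⟩

lemma trace_sum_kraus (X : ι → Matrix n n ℂ) (s : Finset ι) (ρ : Matrix n n ℂ) :
    (∑ j ∈ s, X j * ρ * (X j)ᴴ).trace = ((∑ j ∈ s, (X j)ᴴ * X j) * ρ).trace := by
  simp only [trace_sum, Finset.sum_mul]
  exact Finset.sum_congr rfl fun j _ => by rw [trace_mul_cycle, Matrix.mul_assoc]

/-- Row `k` is the conjugated vectorisation of `X k`, so `(krausRows X)ᴴ * krausRows X` is the
Choi matrix `∑ₖ vec(Xₖ) vec(Xₖ)*` of the map `ρ ↦ ∑ₖ Xₖ ρ Xₖ*`. -/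
def krausRows (X : ι → Matrix n n ℂ) : Matrix ι (n × n) ℂ :=
  of fun k p => star (X k p.1 p.2)

lemma sum_kraus_apply [Fintype ι] (X : ι → Matrix n n ℂ) (ρ : Matrix n n ℂ) (a c : n) :
    (∑ k, X k * ρ * (X k)ᴴ) a c
      = ∑ b, ∑ e, ρ b e * ((krausRows X)ᴴ * krausRows X) (a, b) (c, e) := by
  simp only [Matrix.sum_apply, mul_apply, conjTranspose_apply, krausRows, of_apply, star_star,
    Finset.sum_mul, Finset.mul_sum]
  rw [Finset.sum_comm]
  refine (Finset.sum_congr rfl fun e _ => Finset.sum_comm).trans Finset.sum_comm |>.trans ?_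
  exact Finset.sum_congr rfl fun b _ => Finset.sum_congr rfl fun e _ =>
    Finset.sum_congr rfl fun k _ => by ring

lemma IsCP.exists_kraus_prod {Φ : Matrix n n ℂ → Matrix n n ℂ} (hΦ : IsCP Φ) :
    ∃ Y : n × n → Matrix n n ℂ, ∀ ρ, Φ ρ = ∑ r, Y r * ρ * (Y r)ᴴ := by
  classical
  obtain ⟨m, X, hX⟩ := hΦ
  obtain ⟨B, hB⟩ :=
    (posSemidef_conjTranspose_mul_self (krausRows X)).exists_eq_conjTranspose_mul_self
  let Y : n × n → Matrix n n ℂ := fun r => of fun a b => star (B r (a, b))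
  have hYB : krausRows Y = B := by ext; simp [Y, krausRows]
  refine ⟨Y, fun ρ => ?_⟩
  ext a c
  rw [hX, sum_kraus_apply, sum_kraus_apply, hYB, hB]

end Kraus

section Density

open scoped MatrixOrder

variable {n : Type*} [Fintype n]

lemma isDensity_normalized_vecMulVec {x : n → ℂ} (hx : x ≠ 0) :
    IsDensity ((star x ⬝ᵥ x)⁻¹ • vecMulVec x (star x)) := by
  have hpos : 0 < star x ⬝ᵥ x := dotProduct_star_self_pos_iff.mpr hx
  refine ⟨(posSemidef_vecMulVec_self_star x).smul (inv_nonneg.mpr hpos.le), ?_⟩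
  rw [trace_smul, trace_vecMulVec, dotProduct_comm x, smul_eq_mul, inv_mul_cancel₀ hpos.ne']

lemma trace_mul_vecMulVec_self_star (M : Matrix n n ℂ) (x : n → ℂ) :
    (M * vecMulVec x (star x)).trace = star x ⬝ᵥ M *ᵥ x := by
  rw [mul_vecMulVec, trace_vecMulVec, dotProduct_comm]

lemma eq_one_of_forall_isDensity_trace_mul [DecidableEq n] {M : Matrix n n ℂ}
    (hM : M.IsHermitian) (h : ∀ ρ, IsDensity ρ → (M * ρ).trace = 1) : M = 1 := by
  have hquad : ∀ x, star x ⬝ᵥ M *ᵥ x = star x ⬝ᵥ x := by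
    intro x
    rcases eq_or_ne x 0 with rfl | hx
    · simp
    have hpos : star x ⬝ᵥ x ≠ 0 := (dotProduct_star_self_pos_iff.mpr hx).ne'
    have htr := h _ (isDensity_normalized_vecMulVec hx)
    rw [Matrix.mul_smul, trace_smul, trace_mul_vecMulVec_self_star, smul_eq_mul,
      inv_mul_eq_one₀ hpos] at htr
    exact htr.symm
  refine le_antisymm
    (PosSemidef.of_dotProduct_mulVec_nonneg (isHermitian_one.sub hM) fun x => ?_)
    (PosSemidef.of_dotProduct_mulVec_nonneg (hM.sub isHermitian_one) fun x => ?_) <;>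
    rw [sub_mulVec, dotProduct_sub, one_mulVec, hquad, sub_self]

end Density

lemma sum_conjTranspose_mul_self_eq_one_iff {n ι : Type*} [Fintype n] [DecidableEq n] [Fintype ι]
    (X : ι → Matrix n n ℂ) :
    (∀ ρ, IsDensity ρ → (∑ j, X j * ρ * (X j)ᴴ).trace = 1) ↔ ∑ j, (X j)ᴴ * X j = 1 := by
  simp only [trace_sum_kraus]
  refine ⟨fun h => eq_one_of_forall_isDensity_trace_mul ?_ h, fun h ρ hρ => by
    rw [h, Matrix.one_mul, hρ.2]⟩
  exact (posSemidef_sum _ fun j _ => posSemidef_conjTranspose_mul_self (X j)).isHermitian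

section JointKraus

variable {n ι κ : Type*} [Fintype n] [DecidableEq n] [Fintype ι] [Fintype κ]

def IsJointKraus (Φ Ψ : Matrix n n ℂ → Matrix n n ℂ) (X : ι → Matrix n n ℂ)
    (J₁ J₂ : Finset ι) : Prop :=
  (∀ ρ, Φ ρ = ∑ j ∈ J₁, X j * ρ * (X j)ᴴ) ∧ (∀ ρ, Ψ ρ = ∑ j ∈ J₂, X j * ρ * (X j)ᴴ) ∧
    ∑ j, (X j)ᴴ * X j = 1

variable {Φ Ψ : Matrix n n ℂ → Matrix n n ℂ}

lemma IsJointKraus.reindex {X : ι → Matrix n n ℂ} {J₁ J₂ : Finset ι}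
    (h : IsJointKraus Φ Ψ X J₁ J₂) (e : ι ≃ κ) :
    IsJointKraus Φ Ψ (X ∘ e.symm) (J₁.map e.toEmbedding) (J₂.map e.toEmbedding) := by
  obtain ⟨hΦ, hΨ, hX⟩ := h
  exact ⟨fun ρ => by simp [hΦ], fun ρ => by simp [hΨ],
    (e.symm.sum_comp fun j => (X j)ᴴ * X j).trans hX⟩

lemma IsJointKraus.coexistent4 {X : ι → Matrix n n ℂ} {J₁ J₂ : Finset ι}
    (h : IsJointKraus Φ Ψ X J₁ J₂) : Coexistent4 Φ Ψ := by
  classical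
  obtain ⟨hΦ, hΨ, hX⟩ := h
  let K : Finset ι → Matrix n n ℂ → Matrix n n ℂ := fun s ρ => ∑ j ∈ s, X j * ρ * (X j)ᴴ
  refine ⟨K (J₁ ∩ J₂), K (J₁ \ J₂), K (J₂ \ J₁), K (J₁ ∪ J₂)ᶜ, isCP_sum_kraus X _,
    isCP_sum_kraus X _, isCP_sum_kraus X _, isCP_sum_kraus X _, fun ρ hρ => ?_,
    fun ρ => by rw [hΦ, Finset.sum_inter_add_sum_sdiff],
    fun ρ => by rw [hΨ, Finset.inter_comm, Finset.sum_inter_add_sum_sdiff]⟩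
  rw [← (sum_conjTranspose_mul_self_eq_one_iff X).mpr hX ρ hρ, Finset.sum_inter_add_sum_sdiff,
    ← Finset.sum_union Finset.disjoint_sdiff, Finset.union_sdiff_self_eq_union,
    Finset.sum_add_sum_compl]

lemma Coexistent4.exists_isJointKraus (h : Coexistent4 Φ Ψ) :
    ∃ (X : Option (Fin 3 × n × n) → Matrix n n ℂ) (J₁ J₂ : Finset (Option (Fin 3 × n × n))),
      IsJointKraus Φ Ψ X J₁ J₂ := by
  obtain ⟨K₁, K₂, K₃, K₄, hK₁, hK₂, hK₃, ⟨m, Z, hZ⟩, htr, hΦ, hΨ⟩ := h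
  choose Y hY using fun i : Fin 3 => IsCP.exists_kraus_prod (Φ := ![K₁, K₂, K₃] i)
    (by fin_cases i <;> assumption)
  have hY₁ : ∀ ρ, K₁ ρ = ∑ r, Y 0 r * ρ * (Y 0 r)ᴴ := hY 0
  have hY₂ : ∀ ρ, K₂ ρ = ∑ r, Y 1 r * ρ * (Y 1 r)ᴴ := hY 1
  have hY₃ : ∀ ρ, K₃ ρ = ∑ r, Y 2 r * ρ * (Y 2 r)ᴴ := hY 2
  obtain ⟨B, hB⟩ := (posSemidef_sum Finset.univ fun k _ =>
    posSemidef_conjTranspose_mul_self (Z k)).exists_eq_conjTranspose_mul_self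
  let X : Option (Fin 3 × n × n) → Matrix n n ℂ := fun o => o.elim B fun p => Y p.1 p.2
  refine ⟨X, (({0, 1} : Finset (Fin 3)) ×ˢ Finset.univ).map .some,
    (({0, 2} : Finset (Fin 3)) ×ˢ Finset.univ).map .some, fun ρ => ?_, fun ρ => ?_,
    (sum_conjTranspose_mul_self_eq_one_iff X).mp fun ρ hρ => ?_⟩
  · simp [hΦ, hY₁, hY₂, Finset.sum_product, X]
  · simp [hΨ, hY₁, hY₃, Finset.sum_product, X]
  · have hK₄ : (K₄ ρ).trace = (B * ρ * Bᴴ).trace := by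
      rw [hZ, trace_sum_kraus, hB, trace_mul_cycle B]
    rw [← htr ρ hρ, Fintype.sum_option, Fintype.sum_prod_type, Fin.sum_univ_three]
    simp only [trace_add, hY₁, hY₂, hY₃, hK₄, X, Option.elim_none, Option.elim_some]
    ring

end JointKraus

theorem stmt9_general (d : ℕ) (Φ Ψ : Matrix (Fin d) (Fin d) ℂ → Matrix (Fin d) (Fin d) ℂ) :
    Coexistent4 Φ Ψ ↔
      ∃ (m : ℕ), m ≤ 3 * d ^ 2 + 1 ∧
        ∃ (X : Fin m → Matrix (Fin d) (Fin d) ℂ) (J₁ J₂ : Finset (Fin m)),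
          (∀ ρ, Φ ρ = ∑ j ∈ J₁, X j * ρ * (X j)ᴴ) ∧
          (∀ ρ, Ψ ρ = ∑ j ∈ J₂, X j * ρ * (X j)ᴴ) ∧
          (∑ j, (X j)ᴴ * X j) = (1 : Matrix (Fin d) (Fin d) ℂ) := by
  refine ⟨fun h => ?_, fun ⟨m, _, X, J₁, J₂, hX⟩ => IsJointKraus.coexistent4 hX⟩
  obtain ⟨X, J₁, J₂, hX⟩ := h.exists_isJointKraus
  let e := Fintype.equivFin (Option (Fin 3 × Fin d × Fin d))
  refine ⟨_, le_of_eq ?_, _, _, _, hX.reindex e⟩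
  simp [sq]

/-- operations `Φ` and `Ψ` are coexistent iff there is a finite family of
operators `{X_j}` with `∑ⱼ Xⱼ* Xⱼ = I` and index subsets `J₁, J₂` realizing `Φ` and `Ψ`;
moreover the family can be chosen with at most `3d² + 1` elements. -/
theorem stmt9 (d : ℕ) (Φ Ψ : Matrix (Fin d) (Fin d) ℂ → Matrix (Fin d) (Fin d) ℂ)
    (hΦ : IsOperation Φ) (hΨ : IsOperation Ψ) :
    Coexistent4 Φ Ψ ↔
      ∃ (m : ℕ), m ≤ 3 * d ^ 2 + 1 ∧
        ∃ (X : Fin m → Matrix (Fin d) (Fin d) ℂ) (J₁ J₂ : Finset (Fin m)),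
          (∀ ρ, Φ ρ = ∑ j ∈ J₁, X j * ρ * (X j)ᴴ) ∧
          (∀ ρ, Ψ ρ = ∑ j ∈ J₂, X j * ρ * (X j)ᴴ) ∧
          (∑ j, (X j)ᴴ * X j) = (1 : Matrix (Fin d) (Fin d) ℂ) :=
  stmt9_general d Φ Ψ
end

section
/- Two operations Φ and Ψ on ℂ^d are coexistent if and only if there exists a density matrix Ω on ℂ^d ⊗ ℂ^d with d·tr₁[Ω] = I admitting a decomposition Ω = Ξ₁ + Ξ₂ + Ξ₃ + Ξ₄ into four positive semidefinite operators such that Ξ_Φ = Ξ₁ + Ξ₂ and Ξ_Ψ = Ξ₁ + Ξ₃, where Ξ_Φ, Ξ_Ψ are the Choi–Jamiolkowski operators of Φ and Ψ. -/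
open Matrix Kronecker
open scoped ComplexOrder

/-! The Choi map is additive, and on completely positive maps it is injective with image the
positive semidefinite matrices: a Kraus family `Xᵢ` corresponds to the rank-one decomposition
`Choi Φ = d⁻¹ ∑ᵢ vec Xᵢ (vec Xᵢ)*`. Moreover `d · tr₁ (Choi Φ) = (∑ᵢ Xᵢ* Xᵢ)ᵀ`, which is `1`
exactly when `Φ` preserves the trace of states. Hence instruments `J₁, …, J₄` correspond to
`Ω = Choi (J₁ + J₂ + J₃ + J₄)` with `Ξᵢ = Choi Jᵢ`. -/

def krausMap {n ι : Type*} [Fintype n] [Fintype ι] (X : ι → Matrix n n ℂ) (ρ : Matrix n n ℂ) :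
    Matrix n n ℂ :=
  ∑ i, X i * ρ * (X i)ᴴ

section Kraus

variable {n : Type*} [Fintype n]

theorem isCP_iff_exists_krausMap {Φ : Matrix n n ℂ → Matrix n n ℂ} :
    IsCP Φ ↔ ∃ (m : ℕ) (X : Fin m → Matrix n n ℂ), Φ = krausMap X := by
  simp only [IsCP, funext_iff, krausMap]

theorem isCP_krausMap {ι : Type*} [Fintype ι] (X : ι → Matrix n n ℂ) : IsCP (krausMap X) :=
  ⟨Fintype.card ι, X ∘ (Fintype.equivFin ι).symm, fun ρ =>
    ((Fintype.equivFin ι).symm.sum_comp fun i => X i * ρ * (X i)ᴴ).symm⟩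

theorem IsCP.add {Φ Ψ : Matrix n n ℂ → Matrix n n ℂ} (hΦ : IsCP Φ) (hΨ : IsCP Ψ) :
    IsCP (Φ + Ψ) := by
  obtain ⟨m, X, rfl⟩ := isCP_iff_exists_krausMap.1 hΦ
  obtain ⟨m', Y, rfl⟩ := isCP_iff_exists_krausMap.1 hΨ
  convert isCP_krausMap (Sum.elim X Y) using 1
  ext ρ : 1
  simp [krausMap, Fintype.sum_sum_type]

theorem isLinearMap_krausMap {ι : Type*} [Fintype ι] (X : ι → Matrix n n ℂ) :
    IsLinearMap ℂ (krausMap X) where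
  map_add ρ σ := by simp only [krausMap, mul_add, add_mul, Finset.sum_add_distrib]
  map_smul c ρ := by simp only [krausMap, Matrix.mul_smul, Matrix.smul_mul, Finset.smul_sum]

theorem IsCP.isLinearMap {Φ : Matrix n n ℂ → Matrix n n ℂ} (hΦ : IsCP Φ) : IsLinearMap ℂ Φ := by
  obtain ⟨m, X, rfl⟩ := isCP_iff_exists_krausMap.1 hΦ
  exact isLinearMap_krausMap X

theorem trace_krausMap {ι : Type*} [Fintype ι] (X : ι → Matrix n n ℂ) (ρ : Matrix n n ℂ) :
    (krausMap X ρ).trace = ((∑ i, (X i)ᴴ * X i) * ρ).trace := by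
  simp only [krausMap, trace_sum, Finset.sum_mul]
  refine Finset.sum_congr rfl fun i _ => ?_
  rw [trace_mul_cycle, Matrix.mul_assoc]

variable [DecidableEq n]

theorem Matrix.eq_zero_of_forall_star_dotProduct_mulVec_self {A : Matrix n n ℂ}
    (h : ∀ v, star v ⬝ᵥ A *ᵥ v = 0) : A = 0 := by
  have : toEuclideanLin A = 0 := (inner_map_self_eq_zero (toEuclideanLin A)).1 fun x => by
    rw [EuclideanSpace.inner_eq_star_dotProduct, dotProduct_star, dotProduct_comm]
    exact (congrArg star (h x.ofLp)).trans (star_zero ℂ)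
  simpa using this

-- Test on the pure states `v v* / (v* v)`, then polarize.
theorem trace_mul_isDensity_eq_one_iff {C : Matrix n n ℂ} :
    (∀ ρ, IsDensity ρ → (C * ρ).trace = 1) ↔ C = 1 := by
  refine ⟨fun h => ?_, fun hC ρ hρ => by rw [hC, Matrix.one_mul, hρ.2]⟩
  rw [← sub_eq_zero]
  refine eq_zero_of_forall_star_dotProduct_mulVec_self fun v => ?_
  rw [sub_mulVec, one_mulVec, dotProduct_sub, sub_eq_zero]
  set t := star v ⬝ᵥ v
  by_cases ht : t = 0
  · rw [ht, dotProduct_star_self_eq_zero.1 ht]; simp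
  have hρ : IsDensity (t⁻¹ • vecMulVec v (star v)) := by
    refine ⟨(posSemidef_vecMulVec_self_star v).smul ?_, ?_⟩
    · exact inv_nonneg.2 (dotProduct_star_self_nonneg v)
    · rw [trace_smul, trace_vecMulVec, dotProduct_comm, smul_eq_mul, inv_mul_cancel₀ ht]
  have := h _ hρ
  rw [Matrix.mul_smul, trace_smul, mul_vecMulVec, trace_vecMulVec, dotProduct_comm, smul_eq_mul,
    inv_mul_eq_one₀ ht] at this
  exact this.symm

end Kraus

section Choi

variable {d : ℕ}

theorem choi_apply (Φ : Matrix (Fin d) (Fin d) ℂ → Matrix (Fin d) (Fin d) ℂ) (a b c e : Fin d) :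
    Choi Φ (a, b) (c, e) = (d : ℂ)⁻¹ * Φ (single b e 1) a c := by
  simp [Choi, Matrix.sum_apply, kroneckerMap_apply, single, ite_and, Finset.sum_ite_eq']

theorem choi_add (Φ Ψ : Matrix (Fin d) (Fin d) ℂ → Matrix (Fin d) (Fin d) ℂ) :
    Choi (Φ + Ψ) = Choi Φ + Choi Ψ := by
  ext ⟨a, b⟩ ⟨c, e⟩
  simp only [choi_apply, Matrix.add_apply, Pi.add_apply, mul_add]

theorem choi_krausMap {ι : Type*} [Fintype ι] (X : ι → Matrix (Fin d) (Fin d) ℂ) :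
    Choi (krausMap X) =
      (d : ℂ)⁻¹ • ∑ i, vecMulVec (fun p => X i p.1 p.2) (star fun p => X i p.1 p.2) := by
  ext ⟨a, b⟩ ⟨c, e⟩
  simp [choi_apply, krausMap, Matrix.sum_apply, vecMulVec_apply, mul_apply, single, ite_and,
    Finset.sum_ite_eq]

theorem IsCP.choi_posSemidef {Φ : Matrix (Fin d) (Fin d) ℂ → Matrix (Fin d) (Fin d) ℂ}
    (hΦ : IsCP Φ) : (Choi Φ).PosSemidef := by
  obtain ⟨m, X, rfl⟩ := isCP_iff_exists_krausMap.1 hΦ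
  rw [choi_krausMap]
  exact (posSemidef_sum _ fun i _ => posSemidef_vecMulVec_self_star _).smul (by positivity)

theorem Matrix.PosSemidef.exists_isCP_choi_eq (hd : d ≠ 0)
    {Ξ : Matrix (Fin d × Fin d) (Fin d × Fin d) ℂ} (hΞ : Ξ.PosSemidef) :
    ∃ J, IsCP J ∧ Choi J = Ξ := by
  obtain ⟨m, v, rfl⟩ := posSemidef_iff_eq_sum_vecMulVec.1 hΞ
  set s : ℂ := (Real.sqrt d : ℂ)
  have hs : s * star s = d := by
    rw [Complex.star_def, Complex.conj_ofReal, ← Complex.ofReal_mul,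
      Real.mul_self_sqrt (Nat.cast_nonneg d), Complex.ofReal_natCast]
  refine ⟨krausMap fun k => of fun a b => s * v k (a, b), isCP_krausMap _, ?_⟩
  rw [choi_krausMap]
  change (d : ℂ)⁻¹ • ∑ k, vecMulVec (s • v k) (star (s • v k)) = _
  simp_rw [star_smul, smul_vecMulVec, vecMulVec_smul, smul_smul, ← Finset.smul_sum]
  rw [hs, smul_smul, inv_mul_cancel₀ (Nat.cast_ne_zero.2 hd), one_smul]

theorem IsCP.eq_of_choi_eq (hd : d ≠ 0) {Φ Ψ : Matrix (Fin d) (Fin d) ℂ → Matrix (Fin d) (Fin d) ℂ}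
    (hΦ : IsCP Φ) (hΨ : IsCP Ψ) (h : Choi Φ = Choi Ψ) : Φ = Ψ := by
  have hsingle : ∀ b e, Φ (single b e 1) = Ψ (single b e 1) := fun b e => by
    ext a c
    have := congrFun (congrFun h (a, b)) (c, e)
    rwa [choi_apply, choi_apply, mul_right_inj' (inv_ne_zero (Nat.cast_ne_zero.2 hd))] at this
  have := Matrix.ext_linearMap ℂ (f := IsLinearMap.mk' Φ hΦ.isLinearMap)
    (g := IsLinearMap.mk' Ψ hΨ.isLinearMap) fun b e => LinearMap.ext_ring (hsingle b e)
  exact congrArg DFunLike.coe this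

theorem trace_ptr1 (M : Matrix (Fin d × Fin d) (Fin d × Fin d) ℂ) : (ptr1 M).trace = M.trace := by
  simp only [trace, diag, ptr1, of_apply, Fintype.sum_prod_type]
  exact Finset.sum_comm

theorem trace_eq_one_of_smul_ptr1_eq_one (hd : d ≠ 0)
    {Ω : Matrix (Fin d × Fin d) (Fin d × Fin d) ℂ} (h : (d : ℂ) • ptr1 Ω = 1) : Ω.trace = 1 := by
  have := congrArg trace h
  rw [trace_smul, trace_ptr1, trace_one, Fintype.card_fin, smul_eq_mul] at this
  exact (mul_eq_left₀ (Nat.cast_ne_zero.2 hd)).1 this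

theorem smul_ptr1_choi (hd : d ≠ 0) (Φ : Matrix (Fin d) (Fin d) ℂ → Matrix (Fin d) (Fin d) ℂ) :
    (d : ℂ) • ptr1 (Choi Φ) = of fun i j => (Φ (single i j 1)).trace := by
  ext i j
  simp [ptr1, choi_apply, ← Finset.mul_sum, trace, hd]

theorem IsCP.smul_ptr1_choi_eq_one_iff (hd : d ≠ 0)
    {Φ : Matrix (Fin d) (Fin d) ℂ → Matrix (Fin d) (Fin d) ℂ} (hΦ : IsCP Φ) :
    (d : ℂ) • ptr1 (Choi Φ) = 1 ↔ ∀ ρ, IsDensity ρ → (Φ ρ).trace = 1 := by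
  obtain ⟨m, X, rfl⟩ := isCP_iff_exists_krausMap.1 hΦ
  have : (d : ℂ) • ptr1 (Choi (krausMap X)) = (∑ i, (X i)ᴴ * X i)ᵀ := by
    rw [smul_ptr1_choi hd]
    ext i j
    simp [trace_krausMap, trace_mul_single]
  simp_rw [this, transpose_eq_one, trace_krausMap, trace_mul_isDensity_eq_one_iff]

end Choi

/-- operations `Φ` and `Ψ` are coexistent iff there is a state `Ω` on
`ℂ^d ⊗ ℂ^d` with `d·tr₁[Ω] = I` decomposing as `Ω = Ξ₁+Ξ₂+Ξ₃+Ξ₄` into positive operators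
with `Ξ_Φ = Ξ₁+Ξ₂` and `Ξ_Ψ = Ξ₁+Ξ₃`. -/
theorem stmt10 (d : ℕ) (hd : 0 < d)
    (Φ Ψ : Matrix (Fin d) (Fin d) ℂ → Matrix (Fin d) (Fin d) ℂ)
    (hΦ : IsOperation Φ) (hΨ : IsOperation Ψ) :
    Coexistent4 Φ Ψ ↔
      ∃ Ω : Matrix (Fin d × Fin d) (Fin d × Fin d) ℂ,
        IsDensity Ω ∧ (d : ℂ) • ptr1 Ω = 1 ∧
        ∃ Ξ₁ Ξ₂ Ξ₃ Ξ₄ : Matrix (Fin d × Fin d) (Fin d × Fin d) ℂ,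
          Ξ₁.PosSemidef ∧ Ξ₂.PosSemidef ∧ Ξ₃.PosSemidef ∧ Ξ₄.PosSemidef ∧
          Ω = Ξ₁ + Ξ₂ + Ξ₃ + Ξ₄ ∧
          Choi Φ = Ξ₁ + Ξ₂ ∧ Choi Ψ = Ξ₁ + Ξ₃ := by
  have hd' : d ≠ 0 := hd.ne'
  constructor
  · rintro ⟨J₁, J₂, J₃, J₄, h₁, h₂, h₃, h₄, htr, hΦJ, hΨJ⟩
    have hΛ : IsCP (J₁ + J₂ + J₃ + J₄) := ((h₁.add h₂).add h₃).add h₄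
    have hptr := (hΛ.smul_ptr1_choi_eq_one_iff hd').2 htr
    refine ⟨Choi (J₁ + J₂ + J₃ + J₄), ⟨hΛ.choi_posSemidef,
      trace_eq_one_of_smul_ptr1_eq_one hd' hptr⟩, hptr, Choi J₁, Choi J₂, Choi J₃, Choi J₄,
      h₁.choi_posSemidef, h₂.choi_posSemidef, h₃.choi_posSemidef, h₄.choi_posSemidef,
      by simp only [choi_add], ?_, ?_⟩
    · rw [show Φ = J₁ + J₂ from funext hΦJ, choi_add]
    · rw [show Ψ = J₁ + J₃ from funext hΨJ, choi_add]
  · rintro ⟨-, -, hptr, Ξ₁, Ξ₂, Ξ₃, Ξ₄, hΞ₁, hΞ₂, hΞ₃, hΞ₄, rfl, hΦΞ, hΨΞ⟩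
    obtain ⟨J₁, h₁, rfl⟩ := hΞ₁.exists_isCP_choi_eq hd'
    obtain ⟨J₂, h₂, rfl⟩ := hΞ₂.exists_isCP_choi_eq hd'
    obtain ⟨J₃, h₃, rfl⟩ := hΞ₃.exists_isCP_choi_eq hd'
    obtain ⟨J₄, h₄, rfl⟩ := hΞ₄.exists_isCP_choi_eq hd'
    have hΛ : IsCP (J₁ + J₂ + J₃ + J₄) := ((h₁.add h₂).add h₃).add h₄
    have hΦJ : Φ = J₁ + J₂ := hΦ.1.eq_of_choi_eq hd' (h₁.add h₂) (by rw [choi_add, hΦΞ])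
    have hΨJ : Ψ = J₁ + J₃ := hΨ.1.eq_of_choi_eq hd' (h₁.add h₃) (by rw [choi_add, hΨΞ])
    refine ⟨J₁, J₂, J₃, J₄, h₁, h₂, h₃, h₄,
      (hΛ.smul_ptr1_choi_eq_one_iff hd').1 (by simpa only [choi_add] using hptr),
      congrFun hΦJ, congrFun hΨJ⟩
end

section
/- Let U be a unitary on ℂ^d and 𝒰(ρ) = UρU* the corresponding unitary channel. An operation Φ is coexistent with 𝒰 if and only if Φ = λ𝒰 for some 0 ≤ λ ≤ 1. -/
open Matrix Kronecker
open scoped ComplexOrder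

/-!
Write `xₖ` and `u` for the Kraus operators of `J₁` and for `U`, flattened to vectors indexed by
`n × n`. Because the Choi matrix is additive, `J₁ + J₃ = 𝒰` gives the Loewner inequality
`∑ₖ |xₖ⟩⟨xₖ| ≤ |u⟩⟨u|`, and a rank-one projector dominates only multiples of its own vector; so
every `Xₖ` is a multiple of `U` and `J₁ = μ 𝒰`. As `J₁ + J₃ = 𝒰` is already trace preserving,
`J₂` has trace zero on every basis state, so its (positive) Choi matrix vanishes and `J₂ = 0`.
Finally `μ ≤ 1` because `J₃` has nonnegative trace.
-/

open scoped MatrixOrder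

namespace Matrix

variable {𝕜 n : Type*} [RCLike 𝕜] [Fintype n]

theorem star_dotProduct_vecMulVec_mulVec (u w : n → 𝕜) :
    star w ⬝ᵥ (vecMulVec u (star u) *ᵥ w) = ((‖star u ⬝ᵥ w‖ ^ 2 : ℝ) : 𝕜) := by
  rw [vecMulVec_mulVec, dotProduct_smul, star_dotProduct w u, RCLike.ofReal_pow, ← RCLike.mul_conj]
  simp only [MulOpposite.smul_eq_mul_unop, MulOpposite.unop_op, RCLike.star_def]
  ring

theorem dotProduct_eq_zero_of_vecMulVec_le {u v w : n → 𝕜}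
    (h : vecMulVec v (star v) ≤ vecMulVec u (star u)) (hw : star u ⬝ᵥ w = 0) :
    star v ⬝ᵥ w = 0 := by
  have hnonneg := (le_iff.mp h).dotProduct_mulVec_nonneg w
  rw [sub_mulVec, dotProduct_sub, star_dotProduct_vecMulVec_mulVec,
    star_dotProduct_vecMulVec_mulVec, hw, norm_zero, zero_pow two_ne_zero, RCLike.ofReal_zero,
    zero_sub, neg_nonneg, RCLike.ofReal_nonpos] at hnonneg
  exact norm_eq_zero.mp (pow_eq_zero_iff two_ne_zero |>.mp (le_antisymm hnonneg (by positivity)))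

theorem exists_eq_smul_of_vecMulVec_le {u v : n → 𝕜}
    (h : vecMulVec v (star v) ≤ vecMulVec u (star u)) : ∃ c : 𝕜, v = c • u := by
  by_cases hu : star u ⬝ᵥ u = 0
  · refine ⟨0, ?_⟩
    rw [zero_smul, ← dotProduct_star_self_eq_zero]
    rw [dotProduct_star_self_eq_zero.mp hu] at h
    exact dotProduct_eq_zero_of_vecMulVec_le h (by rw [star_zero, zero_dotProduct])
  · set w := (star u ⬝ᵥ u) • v - (star u ⬝ᵥ v) • u
    have huw : star u ⬝ᵥ w = 0 := by
      simp only [w, dotProduct_sub, dotProduct_smul, smul_eq_mul]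
      ring
    have hvw := dotProduct_eq_zero_of_vecMulVec_le h huw
    have hw : w = 0 := by
      rw [← dotProduct_star_self_eq_zero]
      simp only [w, star_sub, star_smul, sub_dotProduct, smul_dotProduct, hvw, huw, smul_zero,
        sub_zero]
    refine ⟨(star u ⬝ᵥ v) / (star u ⬝ᵥ u), ?_⟩
    rw [div_eq_inv_mul, mul_smul, ← sub_eq_zero.mp hw, smul_smul, inv_mul_cancel₀ hu, one_smul]

end Matrix

section Choi

variable {n : Type*} [DecidableEq n]

/-- The unnormalised Choi matrix: `d • Choi Φ` when `n = Fin d`. -/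
def choiMatrix (Φ : Matrix n n ℂ → Matrix n n ℂ) : Matrix (n × n) (n × n) ℂ :=
  of fun p q => Φ (single p.2 q.2 1) p.1 q.1

theorem choiMatrix_add (J K : Matrix n n ℂ → Matrix n n ℂ) :
    choiMatrix (J + K) = choiMatrix J + choiMatrix K := by
  ext p q
  simp [choiMatrix]

theorem mul_single_mul_conjTranspose_apply [Fintype n] (X : Matrix n n ℂ) (a b c e : n) :
    (X * single b e (1 : ℂ) * Xᴴ) a c = X a b * star (X c e) := by
  simp [mul_apply, single, ite_and]

theorem choiMatrix_kraus {ι : Type*} [Fintype ι] [Fintype n] (X : ι → Matrix n n ℂ) :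
    choiMatrix (fun ρ => ∑ k, X k * ρ * (X k)ᴴ) =
      ∑ k, vecMulVec (Function.uncurry (X k)) (star (Function.uncurry (X k))) := by
  ext ⟨a, b⟩ ⟨c, e⟩
  simp [choiMatrix, Matrix.sum_apply, vecMulVec_apply, mul_single_mul_conjTranspose_apply]
  rfl

theorem choiMatrix_conj [Fintype n] (U : Matrix n n ℂ) :
    choiMatrix (fun ρ => U * ρ * Uᴴ) =
      vecMulVec (Function.uncurry U) (star (Function.uncurry U)) := by
  simpa using choiMatrix_kraus fun _ : Unit => U

theorem trace_choiMatrix [Fintype n] (Φ : Matrix n n ℂ → Matrix n n ℂ) :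
    (choiMatrix Φ).trace = ∑ b, (Φ (single b b 1)).trace := by
  simp only [trace, diag, choiMatrix, of_apply, Fintype.sum_prod_type]
  exact Finset.sum_comm

end Choi

section CompletelyPositive

variable {n : Type*} [Fintype n] {J : Matrix n n ℂ → Matrix n n ℂ}

theorem isCP_zero : IsCP (0 : Matrix n n ℂ → Matrix n n ℂ) :=
  ⟨0, Fin.elim0, fun ρ => by simp⟩

theorem isCP_smul_conj (U : Matrix n n ℂ) {c : ℝ} (hc : 0 ≤ c) :
    IsCP fun ρ => (c : ℂ) • (U * ρ * Uᴴ) := by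
  refine ⟨1, fun _ => (Real.sqrt c : ℂ) • U, fun ρ => ?_⟩
  simp only [Fin.sum_univ_one, conjTranspose_smul, smul_mul, Matrix.mul_smul, smul_smul,
    Complex.star_def, Complex.conj_ofReal, ← Complex.ofReal_mul, Real.mul_self_sqrt hc]

theorem IsCP.posSemidef_apply (hJ : IsCP J) {ρ : Matrix n n ℂ} (hρ : ρ.PosSemidef) :
    (J ρ).PosSemidef := by
  obtain ⟨m, X, hX⟩ := hJ
  rw [hX]
  exact posSemidef_sum _ fun k _ => hρ.mul_mul_conjTranspose_same (X k)

theorem IsCP.posSemidef_choiMatrix [DecidableEq n] (hJ : IsCP J) : (choiMatrix J).PosSemidef := by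
  obtain ⟨m, X, hX⟩ := hJ
  rw [show J = _ from funext hX, choiMatrix_kraus]
  exact posSemidef_sum _ fun k _ => posSemidef_vecMulVec_self_star _

theorem IsCP.exists_eq_smul_conj_of_choiMatrix_le [DecidableEq n] (hJ : IsCP J) {U : Matrix n n ℂ}
    (h : choiMatrix J ≤ choiMatrix fun ρ => U * ρ * Uᴴ) :
    ∃ μ : ℝ, 0 ≤ μ ∧ ∀ ρ, J ρ = (μ : ℂ) • (U * ρ * Uᴴ) := by
  obtain ⟨m, X, hX⟩ := hJ
  rw [show J = _ from funext hX, choiMatrix_kraus, choiMatrix_conj] at h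
  have hXU : ∀ k, ∃ c : ℂ, X k = c • U := fun k => by
    obtain ⟨c, hc⟩ := exists_eq_smul_of_vecMulVec_le <|
      (Finset.single_le_sum (fun j _ => (posSemidef_vecMulVec_self_star _).nonneg)
        (Finset.mem_univ k)).trans h
    exact ⟨c, funext₂ fun a b => congr_fun hc (a, b)⟩
  choose c hc using hXU
  refine ⟨∑ k, Complex.normSq (c k), Finset.sum_nonneg fun k _ => Complex.normSq_nonneg _,
    fun ρ => ?_⟩
  simp only [hX, hc, conjTranspose_smul, smul_mul, Matrix.mul_smul, smul_smul, Complex.star_def,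
    ← Complex.normSq_eq_conj_mul_self, Complex.ofReal_sum, Finset.sum_smul]

theorem IsCP.eq_zero_of_trace_single_eq_zero [DecidableEq n] (hJ : IsCP J)
    (h : ∀ b, (J (single b b 1)).trace = 0) (ρ : Matrix n n ℂ) : J ρ = 0 := by
  have hchoi : choiMatrix J = 0 :=
    hJ.posSemidef_choiMatrix.trace_eq_zero_iff.mp <| by simp [trace_choiMatrix, h]
  have hzero : choiMatrix (fun ρ => (0 : Matrix n n ℂ) * ρ * 0ᴴ) = 0 := by
    ext p q
    simp [choiMatrix]
  obtain ⟨μ, -, hμ⟩ := hJ.exists_eq_smul_conj_of_choiMatrix_le (hchoi.trans hzero.symm).le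
  simpa using hμ ρ

end CompletelyPositive

section Unitary

variable {n : Type*} [Fintype n] [DecidableEq n] {U : Matrix n n ℂ}

theorem isDensity_single (b : n) : IsDensity (single b b (1 : ℂ)) :=
  ⟨diagonal_single b (1 : ℂ) ▸ PosSemidef.diagonal (Pi.single_nonneg.mpr zero_le_one),
    trace_single_eq_same b 1⟩

theorem trace_conj_of_mem_unitaryGroup (hU : U ∈ unitaryGroup n ℂ) (ρ : Matrix n n ℂ) :
    (U * ρ * Uᴴ).trace = ρ.trace := by
  rw [trace_mul_cycle, ← star_eq_conjTranspose, mem_unitaryGroup_iff'.mp hU, one_mul]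

theorem coexistent4_smul_conj (hU : U ∈ unitaryGroup n ℂ) {lam : ℝ} (h₀ : 0 ≤ lam) (h₁ : lam ≤ 1) :
    Coexistent4 (fun ρ => (lam : ℂ) • (U * ρ * Uᴴ)) fun ρ => U * ρ * Uᴴ := by
  have hsplit (X : Matrix n n ℂ) : (lam : ℂ) • X + ((1 - lam : ℝ) : ℂ) • X = X := by
    rw [← add_smul, Complex.ofReal_sub, Complex.ofReal_one, add_sub_cancel, one_smul]
  refine ⟨fun ρ => (lam : ℂ) • (U * ρ * Uᴴ), 0, fun ρ => ((1 - lam : ℝ) : ℂ) • (U * ρ * Uᴴ), 0,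
    isCP_smul_conj U h₀, isCP_zero, isCP_smul_conj U (sub_nonneg.2 h₁), isCP_zero,
    fun ρ hρ => ?_, fun ρ => by rw [Pi.zero_apply, add_zero], fun ρ => (hsplit _).symm⟩
  · rw [Pi.zero_apply, add_zero, add_zero, hsplit, trace_conj_of_mem_unitaryGroup hU, hρ.2]

theorem Coexistent4.exists_eq_smul_conj {Φ : Matrix n n ℂ → Matrix n n ℂ}
    (h : Coexistent4 Φ fun ρ => U * ρ * Uᴴ) (hU : U ∈ unitaryGroup n ℂ) :
    ∃ lam : ℝ, 0 ≤ lam ∧ lam ≤ 1 ∧ ∀ ρ, Φ ρ = (lam : ℂ) • (U * ρ * Uᴴ) := by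
  rcases isEmpty_or_nonempty n with hn | ⟨⟨b₀⟩⟩
  · exact ⟨0, le_rfl, zero_le_one, fun ρ => Subsingleton.elim _ _⟩
  obtain ⟨J₁, J₂, J₃, J₄, hJ₁, hJ₂, hJ₃, hJ₄, htp, hΦ, h𝒰⟩ := h
  beta_reduce at h𝒰
  have htr : ∀ b, (J₁ (single b b 1)).trace + (J₃ (single b b 1)).trace = 1 := fun b => by
    rw [← trace_add, ← h𝒰, trace_conj_of_mem_unitaryGroup hU, (isDensity_single b).2]
  have trace_single_nonneg : ∀ {J}, IsCP J → ∀ b : n, 0 ≤ (J (single b b 1)).trace :=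
    fun hJ b => (hJ.posSemidef_apply (isDensity_single b).1).trace_nonneg
  obtain ⟨μ, hμ, hJ₁μ⟩ := hJ₁.exists_eq_smul_conj_of_choiMatrix_le <| by
    rw [show (fun ρ => U * ρ * Uᴴ) = J₁ + J₃ from funext h𝒰, choiMatrix_add]
    exact le_add_of_nonneg_right hJ₃.posSemidef_choiMatrix.nonneg
  have hJ₂0 : ∀ ρ, J₂ ρ = 0 := hJ₂.eq_zero_of_trace_single_eq_zero fun b => by
    have h := htp _ (isDensity_single b)
    simp only [trace_add] at h
    refine ((add_eq_zero_iff_of_nonneg (trace_single_nonneg hJ₂ b) (trace_single_nonneg hJ₄ b)).1 ?_).1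
    linear_combination h - htr b
  refine ⟨μ, hμ, ?_, fun ρ => by rw [hΦ, hJ₁μ, hJ₂0, add_zero]⟩
  have h := htr b₀
  rw [hJ₁μ, trace_smul, trace_conj_of_mem_unitaryGroup hU, (isDensity_single b₀).2,
    smul_eq_mul, mul_one] at h
  exact_mod_cast (le_add_of_nonneg_right (trace_single_nonneg hJ₃ b₀)).trans h.le

end Unitary

theorem stmt11_general (d : ℕ) (U : Matrix (Fin d) (Fin d) ℂ)
    (hU : U ∈ Matrix.unitaryGroup (Fin d) ℂ)
    (Φ : Matrix (Fin d) (Fin d) ℂ → Matrix (Fin d) (Fin d) ℂ) :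
    Coexistent4 Φ (fun ρ => U * ρ * Uᴴ) ↔
      ∃ lam : ℝ, 0 ≤ lam ∧ lam ≤ 1 ∧ ∀ ρ, Φ ρ = (lam : ℂ) • (U * ρ * Uᴴ) := by
  refine ⟨fun h => h.exists_eq_smul_conj hU, ?_⟩
  rintro ⟨lam, h₀, h₁, hΦ⟩
  rw [show Φ = _ from funext hΦ]
  exact coexistent4_smul_conj hU h₀ h₁

/-- an operation `Φ` is coexistent with the unitary channel
`𝒰(ρ) = UρU*` iff `Φ = λ𝒰` for some `0 ≤ λ ≤ 1`. -/
theorem stmt11 (d : ℕ) (U : Matrix (Fin d) (Fin d) ℂ)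
    (hU : U ∈ Matrix.unitaryGroup (Fin d) ℂ)
    (Φ : Matrix (Fin d) (Fin d) ℂ → Matrix (Fin d) (Fin d) ℂ) (hΦ : IsOperation Φ) :
    Coexistent4 Φ (fun ρ => U * ρ * Uᴴ) ↔
      ∃ lam : ℝ, 0 ≤ lam ∧ lam ≤ 1 ∧ ∀ ρ, Φ ρ = (lam : ℂ) • (U * ρ * Uᴴ) :=
  stmt11_general d U hU Φ
end

section
/- If two pure (Kraus rank-one) operations Φ(ρ) = VρV* and Ψ(ρ) = WρW* are coexistent, then they are trivially coexistent: either Φ + Ψ is an operation (trace-nonincreasing CP map), or Φ − Ψ is an operation, or Ψ − Φ is an operation. -/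
/-!
Every Kraus operator of a decomposition of the pure operation `ρ ↦ VρV*` is a multiple of `V`:
compressing `VρV* = ∑ⱼ XⱼρXⱼ*` with `ρ = xx*` by a vector `y` gives
`|⟨y, Vx⟩|² = ∑ⱼ |⟨y, Xⱼx⟩|²`, so `Xⱼx` is orthogonal to everything orthogonal to `Vx`, and maps
that are pointwise proportional are proportional. Hence, if `J₁ ∩ J₂` carries a nonzero `Xⱼ`, then
`W` is a multiple of `V`, so `Ψ = μ Φ` and one of `Φ - Ψ`, `Ψ - Φ` is a rescaled operation.
Otherwise `Φ + Ψ` is the operation with Kraus operators `{Xⱼ}_{j ∈ J₁ ∪ J₂}`.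
-/

open Matrix Kronecker
open scoped ComplexOrder

theorem LinearMap.exists_eq_smul_of_forall_exists_eq_smul {K V W : Type*} [Field K]
    [AddCommGroup V] [Module K V] [AddCommGroup W] [Module K W] {f g : V →ₗ[K] W}
    (h : ∀ x, ∃ t : K, f x = t • g x) : ∃ c : K, f = c • g := by
  by_cases hg : g = 0
  · refine ⟨0, LinearMap.ext fun x => ?_⟩
    obtain ⟨t, ht⟩ := h x
    simp [ht, hg]
  obtain ⟨y, hy⟩ : ∃ y, g y ≠ 0 := by
    by_contra! h'
    exact hg (LinearMap.ext h')
  obtain ⟨c, hc⟩ := h y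
  refine ⟨c, LinearMap.ext fun x => ?_⟩
  rw [LinearMap.smul_apply]
  by_cases hxy : LinearIndependent K ![g y, g x]
  · obtain ⟨t, ht⟩ := h x
    obtain ⟨s, hs⟩ := h (y + x)
    have hlin : (c - s) • g y + (t - s) • g x = 0 := by
      rw [map_add, map_add, hc, ht] at hs
      linear_combination (norm := module) hs
    obtain ⟨hcs, hts⟩ := LinearIndependent.pair_iff.mp hxy _ _ hlin
    rw [ht, sub_eq_zero.mp hts, sub_eq_zero.mp hcs]
  · obtain ⟨a, ha⟩ : ∃ a : K, a • g y = g x := by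
      by_contra! h'
      exact hxy ((LinearIndependent.pair_iff' hy).mpr h')
    obtain ⟨t, ht⟩ := h (x - a • y)
    rw [map_sub g, map_smul g, ha, sub_self, smul_zero, map_sub, map_smul, hc, sub_eq_zero] at ht
    rw [ht, ← ha, smul_comm]

theorem Matrix.exists_eq_smul_of_forall_mulVec_eq_smul {m n K : Type*} [Field K] [Fintype n]
    [DecidableEq n] {A B : Matrix m n K} (h : ∀ x, ∃ t : K, A *ᵥ x = t • B *ᵥ x) :
    ∃ c : K, A = c • B := by
  obtain ⟨c, hc⟩ := LinearMap.exists_eq_smul_of_forall_exists_eq_smul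
    (f := Matrix.toLin' A) (g := Matrix.toLin' B) h
  exact ⟨c, Matrix.toLin'.injective (by rw [hc, map_smul])⟩

theorem exists_eq_smul_of_forall_dotProduct_eq_zero {n R : Type*} [Fintype n] [Field R]
    [StarRing R] [PartialOrder R] [StarOrderedRing R] {u v : n → R}
    (h : ∀ y, star y ⬝ᵥ u = 0 → star y ⬝ᵥ v = 0) : ∃ t : R, v = t • u := by
  by_cases hu : u = 0
  · exact ⟨0, by simpa [hu] using h v (by simp [hu])⟩
  have huu : star u ⬝ᵥ u ≠ 0 := dotProduct_star_self_eq_zero.not.mpr hu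
  set t := (star u ⬝ᵥ v) / (star u ⬝ᵥ u)
  refine ⟨t, sub_eq_zero.mp (dotProduct_star_self_eq_zero.mp ?_)⟩
  have hyu : star u ⬝ᵥ (v - t • u) = 0 := by
    rw [dotProduct_sub, dotProduct_smul, smul_eq_mul, div_mul_cancel₀ _ huu, sub_self]
  have hu' : star (v - t • u) ⬝ᵥ u = 0 := by rw [star_dotProduct, hyu, star_zero]
  rw [dotProduct_sub, h _ hu', dotProduct_smul, hu', smul_zero, sub_zero]

section

variable {n : Type*} [Fintype n]

theorem Matrix.dotProduct_conj_vecMulVec_mulVec {R : Type*} [CommRing R] [StarRing R]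
    (A : Matrix n n R) (x y : n → R) :
    star y ⬝ᵥ (A * vecMulVec x (star x) * Aᴴ) *ᵥ y
      = (star y ⬝ᵥ A *ᵥ x) * star (star y ⬝ᵥ A *ᵥ x) := by
  rw [mul_vecMulVec, vecMulVec_mul, ← star_mulVec, vecMulVec_mulVec, op_smul_eq_smul,
    dotProduct_smul, smul_eq_mul, mul_comm, star_dotProduct, star_star]

theorem exists_eq_smul_of_conj_eq_sum {ι : Type*} [DecidableEq n] (V : Matrix n n ℂ)
    (X : ι → Matrix n n ℂ) (S : Finset ι) (h : ∀ ρ, V * ρ * Vᴴ = ∑ j ∈ S, X j * ρ * (X j)ᴴ)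
    {j : ι} (hj : j ∈ S) : ∃ c : ℂ, X j = c • V := by
  refine exists_eq_smul_of_forall_mulVec_eq_smul fun x =>
    exists_eq_smul_of_forall_dotProduct_eq_zero fun y hy => ?_
  have hsum := congrArg (fun M => star y ⬝ᵥ M *ᵥ y) (h (vecMulVec x (star x)))
  simp only [sum_mulVec, dotProduct_sum, dotProduct_conj_vecMulVec_mulVec, hy, zero_mul] at hsum
  have hj0 := (Finset.sum_eq_zero_iff_of_nonneg fun i _ => mul_star_self_nonneg _).mp
    hsum.symm j hj
  exact (CStarRing.mul_star_self_eq_zero_iff _).mp hj0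

theorem Matrix.PosSemidef.trace_mul_nonneg {𝕜 : Type*} [RCLike 𝕜] [DecidableEq n]
    {P ρ : Matrix n n 𝕜} (hP : P.PosSemidef) (hρ : ρ.PosSemidef) : 0 ≤ (P * ρ).trace := by
  open scoped MatrixOrder in
  obtain ⟨B, rfl⟩ := CStarAlgebra.nonneg_iff_eq_star_mul_self.mp hρ.nonneg
  rw [star_eq_conjTranspose, ← Matrix.mul_assoc, trace_mul_cycle]
  exact (hP.mul_mul_conjTranspose_same B).trace_nonneg

theorem IsEffect.exists_trace_mul_eq [DecidableEq n] {E ρ : Matrix n n ℂ} (hE : IsEffect E)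
    (hρ : IsDensity ρ) : ∃ t : ℝ, (E * ρ).trace = t ∧ 0 ≤ t ∧ t ≤ 1 := by
  have h0 : (0 : ℂ) ≤ (E * ρ).trace := hE.1.trace_mul_nonneg hρ.1
  have h1 : (0 : ℂ) ≤ ((1 - E) * ρ).trace := hE.2.trace_mul_nonneg hρ.1
  rw [Matrix.sub_mul, Matrix.one_mul, trace_sub, hρ.2, sub_nonneg] at h1
  obtain ⟨hre0, him⟩ := Complex.nonneg_iff.mp h0
  exact ⟨_, Complex.ext rfl (by simp [← him]), hre0, by simpa using (Complex.le_def.mp h1).1⟩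

theorem isEffect_sum_conjTranspose_mul_self [DecidableEq n] {ι : Type*} [Fintype ι]
    {X : ι → Matrix n n ℂ} (hX : (1 - ∑ j, (X j)ᴴ * X j).PosSemidef) (S : Finset ι) :
    IsEffect (∑ j ∈ S, (X j)ᴴ * X j) := by
  classical
  have hpsd (T : Finset ι) : (∑ j ∈ T, (X j)ᴴ * X j).PosSemidef :=
    posSemidef_sum T fun j _ => posSemidef_conjTranspose_mul_self _
  refine ⟨hpsd S, ?_⟩
  rw [show 1 - ∑ j ∈ S, (X j)ᴴ * X j = (1 - ∑ j, (X j)ᴴ * X j) + ∑ j ∈ Sᶜ, (X j)ᴴ * X j by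
    rw [← Finset.sum_add_sum_compl S]; abel]
  exact hX.add (hpsd Sᶜ)

theorem isCP_sum_conj {ι : Type*} (X : ι → Matrix n n ℂ) (S : Finset ι) :
    IsCP fun ρ => ∑ j ∈ S, X j * ρ * (X j)ᴴ :=
  ⟨S.card, fun k => X (S.equivFin.symm k), fun ρ =>
    (S.sum_coe_sort _).symm.trans (S.equivFin.symm.sum_comp fun j => X j * ρ * (X j)ᴴ).symm⟩

theorem isOperation_sum_conj [DecidableEq n] {ι : Type*} [Fintype ι] {X : ι → Matrix n n ℂ}
    (hX : (1 - ∑ j, (X j)ᴴ * X j).PosSemidef) (S : Finset ι) :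
    IsOperation fun ρ => ∑ j ∈ S, X j * ρ * (X j)ᴴ := by
  refine ⟨isCP_sum_conj X S, fun ρ hρ => ?_⟩
  have htr : (∑ j ∈ S, X j * ρ * (X j)ᴴ).trace = ((∑ j ∈ S, (X j)ᴴ * X j) * ρ).trace := by
    simp only [trace_sum, Finset.sum_mul, trace_mul_cycle (X _) ρ]
  rw [htr]
  exact (isEffect_sum_conjTranspose_mul_self hX S).exists_trace_mul_eq hρ

theorem smul_mul_mul_conjTranspose_smul (a : ℂ) (V ρ : Matrix n n ℂ) :
    (a • V) * ρ * (a • V)ᴴ = (Complex.normSq a : ℂ) • (V * ρ * Vᴴ) := by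
  rw [conjTranspose_smul, Matrix.smul_mul, Matrix.smul_mul, Matrix.mul_smul, smul_smul,
    Complex.star_def, Complex.mul_conj]

theorem IsOperation.smul {Φ : Matrix n n ℂ → Matrix n n ℂ} (hΦ : IsOperation Φ) {r : ℝ}
    (h0 : 0 ≤ r) (h1 : r ≤ 1) : IsOperation fun ρ => (r : ℂ) • Φ ρ := by
  obtain ⟨⟨m, X, hX⟩, htr⟩ := hΦ
  refine ⟨⟨m, fun k => (√r : ℂ) • X k, fun ρ => ?_⟩, fun ρ hρ => ?_⟩
  · simp only [hX, Finset.smul_sum, smul_mul_mul_conjTranspose_smul, Complex.normSq_ofReal,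
      Real.mul_self_sqrt h0]
  · obtain ⟨t, ht, h0t, h1t⟩ := htr ρ hρ
    refine ⟨r * t, ?_, mul_nonneg h0 h0t, by nlinarith⟩
    rw [trace_smul, ht, smul_eq_mul, Complex.ofReal_mul]

theorem isOperation_sub_or_of_eq_smul {Φ Ψ : Matrix n n ℂ → Matrix n n ℂ} (hΦ : IsOperation Φ)
    (hΨ : IsOperation Ψ) {μ : ℝ} (hμ : 0 ≤ μ) (h : ∀ ρ, Ψ ρ = (μ : ℂ) • Φ ρ) :
    IsOperation (fun ρ => Φ ρ - Ψ ρ) ∨ IsOperation (fun ρ => Ψ ρ - Φ ρ) := by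
  rcases le_total μ 1 with hμ1 | hμ1
  · left
    convert hΦ.smul (r := 1 - μ) (by linarith) (by linarith) using 2 with ρ
    rw [h]
    push_cast
    module
  · right
    have hμ0 : (μ : ℂ) ≠ 0 := Complex.ofReal_ne_zero.mpr (by linarith)
    convert hΨ.smul (r := 1 - μ⁻¹) (by linarith [inv_le_one_of_one_le₀ hμ1])
      (by linarith [inv_nonneg.mpr hμ]) using 2 with ρ
    rw [h, smul_smul]
    push_cast
    rw [sub_mul, one_mul, inv_mul_cancel₀ hμ0]
    module

end

theorem stmt13_general (d : ℕ) (V W : Matrix (Fin d) (Fin d) ℂ)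
    (hco : KrausCoexistent (fun ρ => V * ρ * Vᴴ) (fun ρ => W * ρ * Wᴴ)) :
    IsOperation (fun ρ => V * ρ * Vᴴ + W * ρ * Wᴴ) ∨
    IsOperation (fun ρ => V * ρ * Vᴴ - W * ρ * Wᴴ) ∨
    IsOperation (fun ρ => W * ρ * Wᴴ - V * ρ * Vᴴ) := by
  obtain ⟨m, X, J₁, J₂, hΦ, hΨ, hX⟩ := hco
  beta_reduce at hΦ hΨ
  by_cases hcommon : ∃ j ∈ J₁ ∩ J₂, X j ≠ 0
  · obtain ⟨j, hj, hXj⟩ := hcommon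
    rw [Finset.mem_inter] at hj
    obtain ⟨a, ha⟩ := exists_eq_smul_of_conj_eq_sum V X J₁ hΦ hj.1
    obtain ⟨b, hb⟩ := exists_eq_smul_of_conj_eq_sum W X J₂ hΨ hj.2
    have hb0 : b ≠ 0 := by
      rintro rfl
      exact hXj (by rw [hb, zero_smul])
    have hWV : W = (a / b) • V := by
      rw [div_eq_inv_mul, mul_smul, ← ha, hb, inv_smul_smul₀ hb0]
    refine Or.inr (isOperation_sub_or_of_eq_smul (Φ := fun ρ => V * ρ * Vᴴ)
      (Ψ := fun ρ => W * ρ * Wᴴ) ?_ ?_ (Complex.normSq_nonneg (a / b)) fun ρ => ?_)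
    · simpa only [← hΦ] using isOperation_sum_conj hX J₁
    · simpa only [← hΨ] using isOperation_sum_conj hX J₂
    · rw [hWV, smul_mul_mul_conjTranspose_smul]
  · push Not at hcommon
    left
    convert isOperation_sum_conj hX (J₁ ∪ J₂) using 2 with ρ
    rw [hΦ, hΨ, ← Finset.sum_union_inter,
      Finset.sum_eq_zero (s := J₁ ∩ J₂) fun j hj => by simp [hcommon j hj], add_zero]

/-- coexistent pure (Kraus rank-one) operations are trivially coexistent:
their sum, or one of their differences, is again an operation. -/
theorem stmt13 (d : ℕ) (V W : Matrix (Fin d) (Fin d) ℂ)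
    (hV : ((1 : Matrix (Fin d) (Fin d) ℂ) - Vᴴ * V).PosSemidef)
    (hW : ((1 : Matrix (Fin d) (Fin d) ℂ) - Wᴴ * W).PosSemidef)
    (hco : KrausCoexistent (fun ρ => V * ρ * Vᴴ) (fun ρ => W * ρ * Wᴴ)) :
    IsOperation (fun ρ => V * ρ * Vᴴ + W * ρ * Wᴴ) ∨
    IsOperation (fun ρ => V * ρ * Vᴴ - W * ρ * Wᴴ) ∨
    IsOperation (fun ρ => W * ρ * Wᴴ - V * ρ * Vᴴ) :=
  stmt13_general d V W hco
end

section
/- For any rank-one projection P on ℂ^d with d ≥ 2, the Lüders operations Λ_P(ρ) = PρP and the identity operation 𝓘(ρ) = ρ are not coexistent: none of Λ_P + 𝓘, Λ_P − 𝓘, 𝓘 − Λ_P is a quantum operation, hence by the pure-operation criterion they are not coexistent. -/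
open Matrix Kronecker
open scoped ComplexOrder

/-!
`Λ_P + 𝓘` maps the state `P` to an operator of trace `2`, and `Λ_P − 𝓘` maps the maximally
mixed state to one of negative trace. If `𝓘 − Λ_P` had Kraus operators `Xₖ`, evaluating it at
`P` would force `Xₖ P = 0`, hence `P σ (1 - P) = 0` for every `σ`, which is impossible for
`P ≠ 0, 1`. Finally, a common Kraus family for `Λ_P` and `𝓘` satisfies `∑_{J₂} Xⱼᴴ Xⱼ = 1`
by trace duality, so all `Xⱼ` outside `J₂` vanish and those in `J₂ \ J₁` are Kraus operators
of `𝓘 − Λ_P`.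
-/

namespace Matrix

variable {n 𝕜 : Type*} [Fintype n] [RCLike 𝕜]

open scoped MatrixOrder in
theorem sum_self_mul_conjTranspose_eq_zero_iff {m ι : Type*} [Fintype m] {s : Finset ι}
    {A : ι → Matrix n m 𝕜} :
    ∑ i ∈ s, A i * (A i)ᴴ = 0 ↔ ∀ i ∈ s, A i = 0 := by
  rw [Finset.sum_eq_zero_iff_of_nonneg fun i _ =>
    nonneg_iff_posSemidef.mpr (posSemidef_self_mul_conjTranspose (A i))]
  simp only [self_mul_conjTranspose_eq_zero]

theorem trace_eq_rank_of_isIdempotentElem {K : Type*} [Field K] [DecidableEq n] {A : Matrix n n K}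
    (hA : IsIdempotentElem A) : A.trace = A.rank := by
  have hlin : IsIdempotentElem A.toLin' := (toLin'_mul A A).symm.trans (congrArg toLin' hA.eq)
  rw [← trace_toLin'_eq, (LinearMap.IsIdempotentElem.isProj_range _ hlin).trace, rank,
    toLin'_apply']

theorem eq_zero_or_eq_zero_of_forall_mul_mul_eq_zero {R : Type*} [Semiring R] [NoZeroDivisors R]
    [DecidableEq n] {A B : Matrix n n R} (h : ∀ σ, A * σ * B = 0) : A = 0 ∨ B = 0 := by
  by_contra! hAB
  obtain ⟨⟨r, j, hA⟩, ⟨k, s, hB⟩⟩ : (∃ r j, A r j ≠ 0) ∧ ∃ k s, B k s ≠ 0 := by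
    simpa [← Matrix.ext_iff] using hAB
  have := congr_fun₂ (h (single j k 1)) r s
  simp [mul_apply, single, ite_and, hA, hB] at this

theorem sum_conjTranspose_mul_self_eq_one_of_forall_sum_eq [DecidableEq n] {ι : Type*}
    {s : Finset ι} {X : ι → Matrix n n 𝕜}
    (hX : ∀ ρ, ∑ j ∈ s, X j * ρ * (X j)ᴴ = ρ) : ∑ j ∈ s, (X j)ᴴ * X j = 1 := by
  refine ext_iff_trace_mul_right.mpr fun ρ => ?_
  conv_rhs => rw [one_mul, ← hX ρ]
  simp only [Finset.sum_mul, trace_sum, mul_assoc]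
  exact Finset.sum_congr rfl fun j _ => by rw [trace_mul_comm, mul_assoc]

end Matrix

section Quantum

variable {n : Type*} [Fintype n]

theorem isDensity_of_rank_eq_one [DecidableEq n] {P : Matrix n n ℂ}
    (hP1 : Pᴴ = P) (hP2 : P * P = P) (hPrank : P.rank = 1) : IsDensity P := by
  refine ⟨?_, ?_⟩
  · simpa only [hP1, hP2] using posSemidef_conjTranspose_mul_self P
  · simpa [hPrank] using trace_eq_rank_of_isIdempotentElem hP2

theorem isDensity_maximallyMixed [DecidableEq n] [Nonempty n] :
    IsDensity ((Fintype.card n : ℂ)⁻¹ • (1 : Matrix n n ℂ)) := by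
  refine ⟨PosSemidef.one.smul ?_, ?_⟩
  · positivity
  · simp [Fintype.card_ne_zero]

theorem not_isOperation_sandwich_add_id {P : Matrix n n ℂ} (hP : IsDensity P)
    (hP2 : P * P = P) : ¬ IsOperation fun ρ => P * ρ * P + ρ := by
  rintro ⟨-, htrace⟩
  obtain ⟨t, ht, -, ht1⟩ := htrace P hP
  dsimp only at ht
  have : (t : ℂ) = 2 := by
    rw [← ht, hP2, hP2, trace_add, hP.2]
    norm_num
  norm_cast at this
  linarith

theorem not_isOperation_sandwich_sub_id [DecidableEq n] {P : Matrix n n ℂ} (hP2 : P * P = P)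
    (htr : P.trace = 1) (hn : 1 < Fintype.card n) : ¬ IsOperation fun ρ => P * ρ * P - ρ := by
  rintro ⟨-, htrace⟩
  have : Nonempty n := Fintype.card_pos_iff.mp (by omega)
  obtain ⟨t, ht, ht0, -⟩ := htrace _ isDensity_maximallyMixed
  dsimp only at ht
  have : (t : ℂ) = ((Fintype.card n : ℝ)⁻¹ - 1 : ℝ) := by
    rw [← ht, mul_smul_comm, mul_one, smul_mul_assoc, hP2, trace_sub, trace_smul, htr,
      isDensity_maximallyMixed.2]
    simp
  norm_cast at this
  have : (Fintype.card n : ℝ)⁻¹ < 1 := inv_lt_one_of_one_lt₀ (by exact_mod_cast hn)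
  linarith

theorem not_isCP_id_sub_sandwich [DecidableEq n] {P : Matrix n n ℂ} (hP1 : Pᴴ = P)
    (hP2 : P * P = P) (hP_ne_zero : P ≠ 0) (hP_ne_one : P ≠ 1) :
    ¬ IsCP fun ρ => ρ - P * ρ * P := by
  rintro ⟨m, X, hX⟩
  have hXP : ∀ k, X k * P = 0 := by
    have : ∑ k, X k * P * (X k * P)ᴴ = 0 := by
      calc ∑ k, X k * P * (X k * P)ᴴ = ∑ k, X k * P * (X k)ᴴ := by
            simp only [conjTranspose_mul, hP1, ← mul_assoc, mul_assoc _ P P, hP2]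
        _ = P - P * P * P := (hX P).symm
        _ = 0 := by rw [hP2, hP2, sub_self]
    simpa using sum_self_mul_conjTranspose_eq_zero_iff.mp this
  have hPσ : ∀ σ, P * σ * (1 - P) = 0 := fun σ => by
    have := hX (P * σ)
    simp only [mul_assoc, hXP, ← mul_assoc (X _) P, zero_mul, Finset.sum_const_zero] at this
    rw [← mul_assoc P P, hP2] at this
    rwa [mul_sub, mul_one, mul_assoc]
  rcases eq_zero_or_eq_zero_of_forall_mul_mul_eq_zero hPσ with h | h
  · exact hP_ne_zero h
  · exact hP_ne_one (sub_eq_zero.mp h).symm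

open scoped MatrixOrder in
theorem KrausCoexistent.isCP_id_sub [DecidableEq n] {Φ : Matrix n n ℂ → Matrix n n ℂ}
    (h : KrausCoexistent Φ fun ρ => ρ) : IsCP fun ρ => ρ - Φ ρ := by
  obtain ⟨m, X, J₁, J₂, hΦ, hid, hle⟩ := h
  replace hid : ∀ ρ, ρ = ∑ j ∈ J₂, X j * ρ * (X j)ᴴ := hid
  have hJ₂ : ∑ j ∈ J₂, (X j)ᴴ * X j = 1 :=
    sum_conjTranspose_mul_self_eq_one_of_forall_sum_eq fun ρ => (hid ρ).symm
  have hvanish : ∀ j ∉ J₂, X j = 0 := by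
    have hrest : ∑ j ∈ J₂ᶜ, (X j)ᴴ * ((X j)ᴴ)ᴴ = 0 := by
      refine le_antisymm ?_ (Finset.sum_nonneg fun j _ => ?_)
      · rw [← Finset.sum_add_sum_compl J₂, hJ₂, sub_add_cancel_left] at hle
        simpa using hle.nonneg
      · exact nonneg_iff_posSemidef.mpr (posSemidef_self_mul_conjTranspose _)
    intro j hj
    simpa using sum_self_mul_conjTranspose_eq_zero_iff.mp hrest j (Finset.mem_compl.mpr hj)
  have hid' : ∀ ρ, ρ = ∑ j, X j * ρ * (X j)ᴴ := fun ρ =>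
    (hid ρ).trans <| Finset.sum_subset J₂.subset_univ fun j _ hj => by simp [hvanish j hj]
  refine ⟨m, fun j => if j ∈ J₁ᶜ then X j else 0, fun ρ => ?_⟩
  calc ρ - Φ ρ = ∑ j ∈ J₁ᶜ, X j * ρ * (X j)ᴴ := by
        rw [hΦ, sub_eq_iff_eq_add, Finset.sum_compl_add_sum, ← hid']
    _ = ∑ j, if j ∈ J₁ᶜ then X j * ρ * (X j)ᴴ else 0 := by
        rw [Finset.sum_ite_mem, Finset.univ_inter]
    _ = _ := Finset.sum_congr rfl fun j _ => by by_cases hj : j ∈ J₁ <;> simp [hj]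

end Quantum

/-- for a rank-one projection `P` on `ℂ^d`, `d ≥ 2`, the Lüders operation
`Λ_P(ρ) = PρP` and the identity operation are not coexistent: none of `Λ_P + 𝓘`,
`Λ_P − 𝓘`, `𝓘 − Λ_P` is an operation, and `Λ_P`, `𝓘` are not coexistent. -/
theorem stmt17 (d : ℕ) (hd : 2 ≤ d) (P : Matrix (Fin d) (Fin d) ℂ)
    (hP1 : Pᴴ = P) (hP2 : P * P = P) (hPrank : P.rank = 1) :
    ¬ IsOperation (fun ρ => P * ρ * P + ρ) ∧
    ¬ IsOperation (fun ρ => P * ρ * P - ρ) ∧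
    ¬ IsOperation (fun ρ => ρ - P * ρ * P) ∧
    ¬ KrausCoexistent (fun ρ => P * ρ * P) (fun ρ : Matrix (Fin d) (Fin d) ℂ => ρ) := by
  have hP : IsDensity P := isDensity_of_rank_eq_one hP1 hP2 hPrank
  have hP_ne_zero : P ≠ 0 := by
    rintro rfl
    simp at hPrank
  have hP_ne_one : P ≠ 1 := by
    rintro rfl
    simp at hPrank
    omega
  have hnotCP := not_isCP_id_sub_sandwich hP1 hP2 hP_ne_zero hP_ne_one
  exact ⟨not_isOperation_sandwich_add_id hP hP2,
    not_isOperation_sandwich_sub_id hP2 hP.2 (by rw [Fintype.card_fin]; omega),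
    fun h => hnotCP h.1, fun h => hnotCP h.isCP_id_sub⟩
end
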